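/- arXiv:1603.05034 — 2 statements merged into one kernel-verified Lean document; each statement's English description precedes it below -/
import Mathlib

section
/- (Theorem 1, dual part.) For every θ ∈ ℝⁿ, the extended dual solution for the enlarged active set A_j = A_i ∪ {j} satisfies the rank-one update identity λ̃_{A_j}(θ) = λ̃_{A_i}(θ) − d̃_j (c_j + v_jᵀ θ) in ℝ^{n_c}. Equivalently: the component of λ_{A_j}(θ) corresponding to an index k ∈ A_i equals the corresponding component of λ_{A_i}(θ) minus (W⁻¹w)_k (c_j + v_jᵀθ), and the component of λ_{A_j}(θ) corresponding to the index j equals c_j + v_jᵀθ. -/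
open Matrix

noncomputable section
namespace MpQP

/-- Submatrix of the rows of `G` indexed by the finite index set `A`. -/
def subRows {nc p : ℕ} (G : Matrix (Fin nc) (Fin p) ℝ) (A : Finset (Fin nc)) :
    Matrix A (Fin p) ℝ := Matrix.of fun i k => G i.val k

/-- Subvector of `b` indexed by `A`. -/
def subVec {nc : ℕ} (b : Fin nc → ℝ) (A : Finset (Fin nc)) : A → ℝ := fun i => b i.val

/-- `G_A` has full row rank, i.e. the rows of `G` indexed by `A` are linearly independent. -/
def FullRowRank {nc m : ℕ} (G : Matrix (Fin nc) (Fin m) ℝ) (A : Finset (Fin nc)) : Prop :=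
  LinearIndependent ℝ (fun i : A => G i.val)

/-- The parametric dual solution `λ_A(θ) = −(G_A H⁻¹ G_Aᵀ)⁻¹ (b_A + S_A θ)`. -/
def lamOf {m n nc : ℕ} (H : Matrix (Fin m) (Fin m) ℝ) (G : Matrix (Fin nc) (Fin m) ℝ)
    (b : Fin nc → ℝ) (S : Matrix (Fin nc) (Fin n) ℝ) (A : Finset (Fin nc))
    (θ : Fin n → ℝ) : A → ℝ :=
  -((subRows G A * H⁻¹ * (subRows G A)ᵀ)⁻¹.mulVec
      (fun i => b i.val + S.mulVec θ i.val))

/-- The parametric primal solution `z_A(θ) = −H⁻¹ G_Aᵀ λ_A(θ)`. -/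
def zOf {m n nc : ℕ} (H : Matrix (Fin m) (Fin m) ℝ) (G : Matrix (Fin nc) (Fin m) ℝ)
    (b : Fin nc → ℝ) (S : Matrix (Fin nc) (Fin n) ℝ) (A : Finset (Fin nc))
    (θ : Fin n → ℝ) : Fin m → ℝ :=
  -((H⁻¹ * (subRows G A)ᵀ).mulVec (lamOf H G b S A θ))

/-- `λ̃_A(θ) ∈ ℝ^{n_c}`: the dual solution extended by zeros outside `A`. -/
def lamExt {m n nc : ℕ} (H : Matrix (Fin m) (Fin m) ℝ) (G : Matrix (Fin nc) (Fin m) ℝ)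
    (b : Fin nc → ℝ) (S : Matrix (Fin nc) (Fin n) ℝ) (A : Finset (Fin nc))
    (θ : Fin n → ℝ) : Fin nc → ℝ :=
  fun k => if h : k ∈ A then lamOf H G b S A θ ⟨k, h⟩ else 0

/-- `W = G_A H⁻¹ G_Aᵀ`. -/
def Wmat {m nc : ℕ} (H : Matrix (Fin m) (Fin m) ℝ) (G : Matrix (Fin nc) (Fin m) ℝ)
    (A : Finset (Fin nc)) : Matrix A A ℝ :=
  subRows G A * H⁻¹ * (subRows G A)ᵀ

/-- `w = G_A H⁻¹ G_jᵀ`. -/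
def wvec {m nc : ℕ} (H : Matrix (Fin m) (Fin m) ℝ) (G : Matrix (Fin nc) (Fin m) ℝ)
    (A : Finset (Fin nc)) (j : Fin nc) : A → ℝ :=
  (subRows G A * H⁻¹).mulVec (G j)

/-- `w₀ = G_j H⁻¹ G_jᵀ`. -/
def w0 {m nc : ℕ} (H : Matrix (Fin m) (Fin m) ℝ) (G : Matrix (Fin nc) (Fin m) ℝ)
    (j : Fin nc) : ℝ :=
  G j ⬝ᵥ H⁻¹.mulVec (G j)

/-- The Schur complement `C = w₀ − wᵀ W⁻¹ w`. -/
def Cval {m nc : ℕ} (H : Matrix (Fin m) (Fin m) ℝ) (G : Matrix (Fin nc) (Fin m) ℝ)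
    (A : Finset (Fin nc)) (j : Fin nc) : ℝ :=
  w0 H G j - wvec H G A j ⬝ᵥ (Wmat H G A)⁻¹.mulVec (wvec H G A j)

/-- `c_j = C⁻¹ (wᵀ W⁻¹ b_A − b_j)`. -/
def cVal {m nc : ℕ} (H : Matrix (Fin m) (Fin m) ℝ) (G : Matrix (Fin nc) (Fin m) ℝ)
    (b : Fin nc → ℝ) (A : Finset (Fin nc)) (j : Fin nc) : ℝ :=
  (Cval H G A j)⁻¹ * (wvec H G A j ⬝ᵥ (Wmat H G A)⁻¹.mulVec (subVec b A) - b j)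

/-- `v_j = C⁻¹ (S_Aᵀ W⁻¹ w − S_jᵀ)`. -/
def vVec {m n nc : ℕ} (H : Matrix (Fin m) (Fin m) ℝ) (G : Matrix (Fin nc) (Fin m) ℝ)
    (S : Matrix (Fin nc) (Fin n) ℝ) (A : Finset (Fin nc)) (j : Fin nc) : Fin n → ℝ :=
  (Cval H G A j)⁻¹ •
    ((subRows S A)ᵀ.mulVec ((Wmat H G A)⁻¹.mulVec (wvec H G A j)) - S j)

/-- `d̃_j ∈ ℝ^{n_c}`: equal to `W⁻¹ w` on `A`, to `−1` at index `j`, and `0` elsewhere. -/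
def dExt {m nc : ℕ} (H : Matrix (Fin m) (Fin m) ℝ) (G : Matrix (Fin nc) (Fin m) ℝ)
    (A : Finset (Fin nc)) (j : Fin nc) : Fin nc → ℝ :=
  fun k =>
    if h : k ∈ A then (Wmat H G A)⁻¹.mulVec (wvec H G A j) ⟨k, h⟩
    else if k = j then -1 else 0

/-- `f_j = H⁻¹ G_{A ∪ {j}}ᵀ (d̃_j restricted to A ∪ {j})`. -/
def fVec {m nc : ℕ} (H : Matrix (Fin m) (Fin m) ℝ) (G : Matrix (Fin nc) (Fin m) ℝ)
    (A : Finset (Fin nc)) (j : Fin nc) : Fin m → ℝ :=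
  (H⁻¹ * (subRows G (insert j A))ᵀ).mulVec (fun i => dExt H G A j i.val)

/-! Everything is embedded in `ℝ^{n_c}` through the Gram matrix `K = G H⁻¹ Gᵀ`, of which `W`, `w`
and `w₀` are blocks. Since `K` restricted to `A` is positive definite when `G_A` has full row rank,
a vector supported on `A` is determined by the values of `K y` on `A`; in particular `λ̃_A(θ)` is
the vector supported on `A` with `(K λ̃_A)_p = -(b_p + (S θ)_p)` for `p ∈ A`. The direction `d̃_j`
satisfies `K d̃_j = 0` on `A_i` and `(K d̃_j)_j = -C`, so `C ≠ 0` because `d̃_j ≠ 0`. Hence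
`λ̃_{A_i} - (c_j + v_jᵀθ) d̃_j` satisfies the characterisation of `λ̃_{A_j}`: on `A_i` directly, and
at `j` because `C (c_j + v_jᵀθ) = -wᵀλ_{A_i} - b_j - (S θ)_j`. -/

section Restriction

variable {R ι κ : Type*} [Fintype κ]

theorem mulVec_apply_eq_sum_of_support [NonUnitalNonAssocSemiring R] (M : Matrix ι κ R)
    {s : Finset κ} {y : κ → R} (hy : ∀ k ∉ s, y k = 0) (i : ι) :
    (M *ᵥ y) i = ∑ a : s, M i a * y a := by
  rw [mulVec, dotProduct, Finset.sum_coe_sort s (fun k => M i k * y k)]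
  exact (Finset.sum_subset (Finset.subset_univ s) fun k _ hk => by simp [hy k hk]).symm

theorem eq_of_mulVec_eq_on [Field R] [DecidableEq κ] {M : Matrix κ κ R} {s : Finset κ}
    (hM : IsUnit (M.submatrix (Subtype.val : s → κ) (Subtype.val : s → κ))) {y z : κ → R}
    (hy : ∀ k ∉ s, y k = 0) (hz : ∀ k ∉ s, z k = 0)
    (h : ∀ p ∈ s, (M *ᵥ y) p = (M *ᵥ z) p) : y = z := by
  have hyz : ∀ k ∉ s, (y - z) k = 0 := fun k hk => by simp [hy k hk, hz k hk]
  have hres : (fun a : s => (y - z) a) = 0 := by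
    refine mulVec_injective_iff_isUnit.2 hM ?_
    ext p
    rw [mulVec_zero]
    change ∑ a : s, M p a * (y - z) a = 0
    rw [← mulVec_apply_eq_sum_of_support M hyz, mulVec_sub, Pi.sub_apply, h p p.2, sub_self]
  funext k
  by_cases hk : k ∈ s
  · exact sub_eq_zero.1 (congrFun hres ⟨k, hk⟩)
  · rw [hy k hk, hz k hk]

end Restriction

section Gram

def gram {m nc : ℕ} (H : Matrix (Fin m) (Fin m) ℝ) (G : Matrix (Fin nc) (Fin m) ℝ) :
    Matrix (Fin nc) (Fin nc) ℝ :=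
  G * H⁻¹ * Gᵀ

variable {m n nc : ℕ} {H : Matrix (Fin m) (Fin m) ℝ} {G : Matrix (Fin nc) (Fin m) ℝ}
  {A : Finset (Fin nc)} {j : Fin nc}

theorem Wmat_eq_submatrix : Wmat H G A = (gram H G).submatrix Subtype.val Subtype.val := by
  ext a c
  simp [Wmat, gram, subRows, mul_apply]

theorem wvec_apply (a : A) : wvec H G A j a = gram H G a j := by
  simp [wvec, gram, subRows, mul_apply, mulVec, dotProduct]

theorem w0_eq : w0 H G j = gram H G j j := by
  simp only [w0, gram, mul_apply, mulVec, dotProduct, transpose_apply, Finset.mul_sum,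
    Finset.sum_mul]
  rw [Finset.sum_comm]
  exact Finset.sum_congr rfl fun _ _ => Finset.sum_congr rfl fun _ _ => by ring

theorem gram_isSymm (hH : H.IsSymm) : (gram H G).IsSymm := by
  simp [gram, IsSymm, transpose_mul, Matrix.mul_assoc, transpose_nonsing_inv, hH.eq]

theorem Wmat_posDef (hH : H.PosDef) (hA : FullRowRank G A) : (Wmat H G A).PosDef := by
  have := hH.inv.mul_mul_conjTranspose_same (B := subRows G A) (vecMul_injective_iff.2 hA)
  simpa [Wmat, conjTranspose_eq_transpose_of_trivial] using this

variable {b : Fin nc → ℝ} {S : Matrix (Fin nc) (Fin n) ℝ} {θ : Fin n → ℝ}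

theorem lamExt_of_notMem {k : Fin nc} (hk : k ∉ A) : lamExt H G b S A θ k = 0 := dif_neg hk

theorem Wmat_mulVec_lamOf (hA : IsUnit (Wmat H G A)) :
    Wmat H G A *ᵥ lamOf H G b S A θ = -fun a : A => b a + (S *ᵥ θ) a := by
  rw [lamOf, ← Wmat, mulVec_neg, mulVec_mulVec,
    mul_nonsing_inv _ ((isUnit_iff_isUnit_det _).1 hA), one_mulVec]

theorem gram_mulVec_lamExt (i : Fin nc) :
    (gram H G *ᵥ lamExt H G b S A θ) i = ∑ a : A, gram H G i a * lamOf H G b S A θ a := by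
  rw [mulVec_apply_eq_sum_of_support _ fun k hk => lamExt_of_notMem hk]
  simp [lamExt]

theorem gram_mulVec_lamExt_of_mem (hA : IsUnit (Wmat H G A)) {p : Fin nc} (hp : p ∈ A) :
    (gram H G *ᵥ lamExt H G b S A θ) p = -(b p + (S *ᵥ θ) p) := by
  have := congrFun (Wmat_mulVec_lamOf (b := b) (S := S) (θ := θ) hA) ⟨p, hp⟩
  rw [Wmat_eq_submatrix] at this
  rw [gram_mulVec_lamExt]
  exact this

theorem gram_mulVec_lamExt_eq_wvec_dotProduct (hH : H.IsSymm) (j : Fin nc) :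
    (gram H G *ᵥ lamExt H G b S A θ) j = wvec H G A j ⬝ᵥ lamOf H G b S A θ := by
  simp only [gram_mulVec_lamExt, dotProduct, wvec_apply, (gram_isSymm hH).apply]

theorem dExt_of_notMem {k : Fin nc} (hk : k ∉ insert j A) : dExt H G A j k = 0 := by
  rw [Finset.mem_insert, not_or] at hk
  simp [dExt, hk.1, hk.2]

theorem dExt_self (hj : j ∉ A) : dExt H G A j j = -1 := by
  simp [dExt, hj]

theorem gram_mulVec_dExt (hj : j ∉ A) (i : Fin nc) :
    (gram H G *ᵥ dExt H G A j) i =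
      ∑ a : A, gram H G i a * ((Wmat H G A)⁻¹ *ᵥ wvec H G A j) a - gram H G i j := by
  set u := (Wmat H G A)⁻¹ *ᵥ wvec H G A j
  have hd : dExt H G A j = (fun k => if h : k ∈ A then u ⟨k, h⟩ else 0) - Pi.single j 1 := by
    funext k
    by_cases hk : k ∈ A
    · simp [dExt, hk, ne_of_mem_of_not_mem hk hj, u]
    · by_cases hkj : k = j
      · subst hkj
        simp [dExt, hk]
      · simp [dExt, hk, hkj]
  rw [hd, mulVec_sub, Pi.sub_apply, mulVec_apply_eq_sum_of_support _ (s := A) (by simp_all)]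
  simp

theorem gram_mulVec_dExt_of_mem (hA : IsUnit (Wmat H G A)) (hj : j ∉ A) {p : Fin nc}
    (hp : p ∈ A) : (gram H G *ᵥ dExt H G A j) p = 0 := by
  have hWu : Wmat H G A *ᵥ ((Wmat H G A)⁻¹ *ᵥ wvec H G A j) = wvec H G A j := by
    rw [mulVec_mulVec, mul_nonsing_inv _ ((isUnit_iff_isUnit_det _).1 hA), one_mulVec]
  have := congrFun hWu ⟨p, hp⟩
  rw [Wmat_eq_submatrix, wvec_apply] at this
  rw [gram_mulVec_dExt hj, ← sub_eq_zero.2 this]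
  rfl

theorem gram_mulVec_dExt_self (hH : H.IsSymm) (hj : j ∉ A) :
    (gram H G *ᵥ dExt H G A j) j = -Cval H G A j := by
  simp only [gram_mulVec_dExt hj, Cval, w0_eq, dotProduct, wvec_apply, (gram_isSymm hH).apply]
  ring

theorem eq_of_gram_mulVec_eq_on (hA : IsUnit (Wmat H G A)) {y z : Fin nc → ℝ}
    (hy : ∀ k ∉ A, y k = 0) (hz : ∀ k ∉ A, z k = 0)
    (h : ∀ p ∈ A, (gram H G *ᵥ y) p = (gram H G *ᵥ z) p) : y = z :=
  eq_of_mulVec_eq_on (Wmat_eq_submatrix ▸ hA) hy hz h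

theorem Cval_ne_zero (hH : H.PosDef) (hj : j ∉ A) (hA : FullRowRank G A)
    (hAj : FullRowRank G (insert j A)) : Cval H G A j ≠ 0 := by
  intro hC
  have hd : dExt H G A j = 0 := by
    refine eq_of_gram_mulVec_eq_on (Wmat_posDef hH hAj).isUnit (fun k hk => dExt_of_notMem hk)
      (fun _ _ => rfl) fun p hp => ?_
    rw [mulVec_zero]
    rcases Finset.mem_insert.1 hp with rfl | hpA
    · rw [gram_mulVec_dExt_self (isHermitian_iff_isSymm.1 hH.1) hj, hC, neg_zero]
      rfl
    · exact gram_mulVec_dExt_of_mem (Wmat_posDef hH hA).isUnit hj hpA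
  simpa [dExt_self hj] using congrFun hd j

theorem Cval_mul_add_vVec_dotProduct (hH : H.IsSymm) (hC : Cval H G A j ≠ 0) :
    Cval H G A j * (cVal H G b A j + vVec H G S A j ⬝ᵥ θ) =
      -(wvec H G A j ⬝ᵥ lamOf H G b S A θ) - (b j + (S *ᵥ θ) j) := by
  have hW : (Wmat H G A)⁻¹.IsSymm := by
    rw [Wmat_eq_submatrix]
    exact ((gram_isSymm hH).submatrix _).inv
  have hS : ((subRows S A)ᵀ *ᵥ ((Wmat H G A)⁻¹ *ᵥ wvec H G A j)) ⬝ᵥ θ =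
      wvec H G A j ⬝ᵥ (Wmat H G A)⁻¹ *ᵥ (subRows S A *ᵥ θ) := by
    rw [mulVec_transpose, ← dotProduct_mulVec, dotProduct_comm, dotProduct_mulVec,
      ← mulVec_transpose, hW.eq, dotProduct_comm]
  have hlam : lamOf H G b S A θ = -((Wmat H G A)⁻¹ *ᵥ (subVec b A + subRows S A *ᵥ θ)) := rfl
  rw [cVal, vVec, smul_dotProduct, sub_dotProduct, hS, hlam, dotProduct_neg, mulVec_add,
    dotProduct_add, smul_eq_mul, ← mul_add, mul_inv_cancel_left₀ hC]
  change _ = _ - (b j + S j ⬝ᵥ θ)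
  ring

end Gram

/-- Theorem 1, dual part: the extended dual solution for the enlarged active set
`A_j = A_i ∪ {j}` is a rank-one update of the one for `A_i`:
`λ̃_{A_j}(θ) = λ̃_{A_i}(θ) − (c_j + v_jᵀθ) d̃_j`. -/
theorem dual_rankOne_update_add
    {m n nc : ℕ} (H : Matrix (Fin m) (Fin m) ℝ) (hH : H.PosDef)
    (G : Matrix (Fin nc) (Fin m) ℝ) (b : Fin nc → ℝ) (S : Matrix (Fin nc) (Fin n) ℝ)
    (Ai : Finset (Fin nc)) (j : Fin nc) (hj : j ∉ Ai)
    (hAi : FullRowRank G Ai) (hAj : FullRowRank G (insert j Ai)) :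
    ∀ θ : Fin n → ℝ,
      lamExt H G b S (insert j Ai) θ =
        lamExt H G b S Ai θ -
          (cVal H G b Ai j + vVec H G S Ai j ⬝ᵥ θ) • dExt H G Ai j := by
  intro θ
  have hHs : H.IsSymm := isHermitian_iff_isSymm.1 hH.1
  have hW := (Wmat_posDef hH hAi).isUnit
  have hWj := (Wmat_posDef hH hAj).isUnit
  have hC := Cval_ne_zero hH hj hAi hAj
  refine eq_of_gram_mulVec_eq_on hWj (fun k hk => lamExt_of_notMem hk)
    (fun k hk => ?_) fun p hp => ?_
  · rw [Pi.sub_apply, lamExt_of_notMem (fun h => hk (Finset.mem_insert_of_mem h)),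
      Pi.smul_apply, dExt_of_notMem hk, smul_zero, sub_zero]
  rw [gram_mulVec_lamExt_of_mem hWj hp, mulVec_sub, mulVec_smul,
    Pi.sub_apply, Pi.smul_apply, smul_eq_mul]
  rcases Finset.mem_insert.1 hp with rfl | hpA
  · rw [gram_mulVec_lamExt_eq_wvec_dotProduct hHs, gram_mulVec_dExt_self hHs hj]
    linear_combination -Cval_mul_add_vVec_dotProduct hHs hC
  · rw [gram_mulVec_lamExt_of_mem hW hpA, gram_mulVec_dExt_of_mem hW hj hpA, mul_zero, sub_zero]

end MpQP
end
end

section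
/- (Theorem 3, primal part.) Let A_0, A_1, …, A_K ⊆ {1,…,n_c} be a sequence of index sets such that each G_{A_l} has full row rank, and for each l ∈ {1,…,K} either A_l = A_{l−1} ∪ {j_l} for some j_l ∉ A_{l−1}, or A_l = A_{l−1} \ {j_l} for some j_l ∈ A_{l−1}. For each l define the scalar c_l, the vector v_l ∈ ℝⁿ, and the vector f_l ∈ ℝ^m as follows: if A_l = A_{l−1} ∪ {j_l}, they are the update quantities c_j, v_j, f_j of Theorem 1 applied with A_i = A_{l−1} and j = j_l; if A_l = A_{l−1} \ {j_l}, they are the quantities c_j, v_j, −f_j of Theorem 1 applied with A_i = A_l and j = j_l. Then for every θ ∈ ℝⁿ, z_{A_K}(θ) = z_{A_0}(θ) + Σ_{l=1}^{K} f_l (c_l + v_lᵀθ). -/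
open Matrix

noncomputable section
namespace MpQP

/-!
The primal solution `z_A(θ)` is the unique point of `H⁻¹ · span {G_i | i ∈ A}` that satisfies
the active constraints `G_A z = b_A + S_A θ`; uniqueness holds because `W = G_A H⁻¹ G_Aᵀ` is
invertible. For `j ∉ A` the direction `f_j = H⁻¹ (G_Aᵀ W⁻¹ w − G_jᵀ)` lies in
`H⁻¹ · span {G_i | i ∈ A ∪ {j}}`, is annihilated by `G_A`, and has `G_j f_j = −C`, where
`C = gᵀ H⁻¹ g > 0` for `g = G_Aᵀ W⁻¹ w − G_jᵀ ≠ 0` (full row rank of `G_{A ∪ {j}}`). Since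
`(c_j + v_jᵀ θ) C = wᵀ W⁻¹ (b_A + S_A θ) − (b_j + S_j θ)`, the point
`z_A(θ) + (c_j + v_jᵀ θ) f_j` satisfies every constraint of `A ∪ {j}`, hence equals
`z_{A ∪ {j}}(θ)`. A removal step is an addition step read backwards, and along the path the
increments telescope.
-/

theorem sum_succ_sub_castSucc {M : Type*} [AddCommGroup M] :
    ∀ {K : ℕ} (F : Fin (K + 1) → M),
      ∑ l : Fin K, (F l.succ - F l.castSucc) = F (Fin.last K) - F 0
  | 0, F => by simp
  | K + 1, F => by
    rw [Fin.sum_univ_castSucc]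
    simp only [Fin.succ_castSucc]
    rw [sum_succ_sub_castSucc (fun l => F l.castSucc)]
    simp only [Fin.succ_last, Fin.castSucc_zero]
    abel

variable {m n nc : ℕ}

section Rows

variable (G : Matrix (Fin nc) (Fin m) ℝ) (A : Finset (Fin nc))

theorem subRows_mulVec_apply (x : Fin m → ℝ) (i : A) : (subRows G A *ᵥ x) i = G i ⬝ᵥ x :=
  rfl

theorem subRows_transpose_mulVec (μ : A → ℝ) :
    (subRows G A)ᵀ *ᵥ μ = ∑ i, μ i • G i := by
  ext k
  simp [mulVec, dotProduct, subRows, Finset.sum_apply, mul_comm]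

theorem mem_span_iff_exists_subRows_transpose_mulVec {y : Fin m → ℝ} :
    y ∈ Submodule.span ℝ (G.row '' A) ↔ ∃ μ : A → ℝ, (subRows G A)ᵀ *ᵥ μ = y := by
  rw [Submodule.mem_span_image_finset_iff_exists_fun]
  simp only [subRows_transpose_mulVec, row_apply']

theorem fullRowRank_insert_iff {j : Fin nc} (hj : j ∉ A) :
    FullRowRank G (insert j A) ↔ FullRowRank G A ∧ G j ∉ Submodule.span ℝ (G.row '' A) := by
  have := linearIndepOn_insert (K := ℝ) (f := G.row) (s := (A : Set (Fin nc))) hj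
  rwa [← Finset.coe_insert] at this

end Rows

section Kkt

variable (H : Matrix (Fin m) (Fin m) ℝ) (G : Matrix (Fin nc) (Fin m) ℝ)
  (b : Fin nc → ℝ) (S : Matrix (Fin nc) (Fin n) ℝ) (A : Finset (Fin nc)) (θ : Fin n → ℝ)

theorem Wmat_isSymm (hH : H.IsSymm) : (Wmat H G A).IsSymm := by
  simp only [IsSymm, Wmat, transpose_mul, transpose_transpose, hH.inv.eq, Matrix.mul_assoc]

theorem isUnit_det_Wmat (hH : H.PosDef) (hA : FullRowRank G A) : IsUnit (Wmat H G A).det := by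
  have hPD : (subRows G A * H⁻¹ * (subRows G A)ᴴ).PosDef :=
    hH.inv.mul_mul_conjTranspose_same (vecMul_injective_iff.mpr hA)
  rw [conjTranspose_eq_transpose_of_trivial] at hPD
  exact (isUnit_iff_isUnit_det _).mp hPD.isUnit

-- The points `z` with `H z + G_Aᵀ μ = 0` for some `μ`: KKT stationarity for the active set `A`.
def stationarySpace : Submodule ℝ (Fin m → ℝ) :=
  (Submodule.span ℝ (G.row '' A)).map H⁻¹.mulVecLin

theorem stationarySpace_mono {A B : Finset (Fin nc)} (h : A ⊆ B) :
    stationarySpace H G A ≤ stationarySpace H G B :=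
  Submodule.map_mono (Submodule.span_mono (Set.image_mono (Finset.coe_subset.mpr h)))

theorem mulVec_subRows_transpose_mem_stationarySpace (μ : A → ℝ) :
    H⁻¹ *ᵥ ((subRows G A)ᵀ *ᵥ μ) ∈ stationarySpace H G A :=
  Submodule.mem_map_of_mem ((mem_span_iff_exists_subRows_transpose_mulVec G A).mpr ⟨μ, rfl⟩)

theorem subRows_mulVec_mulVec_subRows_transpose (μ : A → ℝ) :
    subRows G A *ᵥ (H⁻¹ *ᵥ ((subRows G A)ᵀ *ᵥ μ)) = Wmat H G A *ᵥ μ := by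
  simp only [mulVec_mulVec, Wmat, Matrix.mul_assoc]

theorem zOf_eq_mulVec :
    zOf H G b S A θ =
      H⁻¹ *ᵥ ((subRows G A)ᵀ *ᵥ ((Wmat H G A)⁻¹ *ᵥ subVec (b + S *ᵥ θ) A)) := by
  simp only [zOf, lamOf, Wmat, mulVec_neg, neg_neg, mulVec_mulVec, Matrix.mul_assoc]
  rfl

theorem zOf_mem_stationarySpace : zOf H G b S A θ ∈ stationarySpace H G A := by
  rw [zOf_eq_mulVec]
  exact mulVec_subRows_transpose_mem_stationarySpace H G A _

theorem subRows_mulVec_zOf (hW : IsUnit (Wmat H G A).det) :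
    subRows G A *ᵥ zOf H G b S A θ = subVec (b + S *ᵥ θ) A := by
  rw [zOf_eq_mulVec, subRows_mulVec_mulVec_subRows_transpose, mulVec_mulVec,
    mul_nonsing_inv _ hW, one_mulVec]

theorem zOf_eq_of_mem_stationarySpace (hW : IsUnit (Wmat H G A).det) {z : Fin m → ℝ}
    (hz : z ∈ stationarySpace H G A) (hact : subRows G A *ᵥ z = subVec (b + S *ᵥ θ) A) :
    zOf H G b S A θ = z := by
  obtain ⟨y, hy, rfl⟩ := hz
  obtain ⟨μ, rfl⟩ := (mem_span_iff_exists_subRows_transpose_mulVec G A).mp hy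
  have hμ : μ = (Wmat H G A)⁻¹ *ᵥ subVec (b + S *ᵥ θ) A := by
    rw [← hact]
    change μ = _ *ᵥ (subRows G A *ᵥ (H⁻¹ *ᵥ ((subRows G A)ᵀ *ᵥ μ)))
    rw [subRows_mulVec_mulVec_subRows_transpose, mulVec_mulVec, nonsing_inv_mul _ hW,
      one_mulVec]
  rw [zOf_eq_mulVec, ← hμ]
  rfl

section Update

variable {j : Fin nc}

theorem fVec_mem_stationarySpace :
    fVec H G A j ∈ stationarySpace H G (insert j A) := by
  rw [fVec, ← mulVec_mulVec]
  exact mulVec_subRows_transpose_mem_stationarySpace H G _ _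

theorem fVec_eq (hj : j ∉ A) :
    fVec H G A j = H⁻¹ *ᵥ ((subRows G A)ᵀ *ᵥ ((Wmat H G A)⁻¹ *ᵥ wvec H G A j) - G j) := by
  rw [fVec, ← mulVec_mulVec, subRows_transpose_mulVec, subRows_transpose_mulVec,
    Finset.sum_coe_sort (insert j A) (fun i => dExt H G A j i • G i), Finset.sum_insert hj,
    ← Finset.sum_coe_sort A]
  simp [dExt, hj, sub_eq_add_neg, add_comm]

theorem wvec_eq : wvec H G A j = subRows G A *ᵥ (H⁻¹ *ᵥ G j) :=
  (mulVec_mulVec _ _ _).symm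

theorem subRows_mulVec_fVec (hW : IsUnit (Wmat H G A).det) (hj : j ∉ A) :
    subRows G A *ᵥ fVec H G A j = 0 := by
  rw [fVec_eq H G A hj, mulVec_sub, mulVec_sub, subRows_mulVec_mulVec_subRows_transpose,
    mulVec_mulVec, mul_nonsing_inv _ hW, one_mulVec, wvec_eq, sub_self]

theorem dotProduct_mulVec_subRows_transpose (hH : H.IsSymm) (x : A → ℝ) :
    G j ⬝ᵥ (H⁻¹ *ᵥ ((subRows G A)ᵀ *ᵥ x)) = wvec H G A j ⬝ᵥ x := by
  rw [mulVec_mulVec, dotProduct_mulVec, ← mulVec_transpose, transpose_mul, transpose_transpose,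
    hH.inv.eq, wvec]

theorem dotProduct_fVec (hH : H.IsSymm) (hj : j ∉ A) :
    G j ⬝ᵥ fVec H G A j = -Cval H G A j := by
  rw [fVec_eq H G A hj, mulVec_sub, dotProduct_sub,
    dotProduct_mulVec_subRows_transpose H G A hH, Cval, w0]
  ring

theorem Cval_pos (hH : H.PosDef) (hj : j ∉ A) (hA : FullRowRank G (insert j A)) :
    0 < Cval H G A j := by
  have hHs : H.IsSymm := isHermitian_iff_isSymm.mp hH.isHermitian
  have hW := isUnit_det_Wmat H G A hH ((fullRowRank_insert_iff G A hj).mp hA).1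
  set g := (subRows G A)ᵀ *ᵥ ((Wmat H G A)⁻¹ *ᵥ wvec H G A j) - G j
  have hf : fVec H G A j = H⁻¹ *ᵥ g := fVec_eq H G A hj
  -- `g ⬝ᵥ H⁻¹ g` is `C`, because `H⁻¹ g = f` is orthogonal to the rows of `G_A`
  have hC : Cval H G A j = g ⬝ᵥ (H⁻¹ *ᵥ g) := by
    rw [← hf, sub_dotProduct, mulVec_transpose, ← dotProduct_mulVec,
      subRows_mulVec_fVec H G A hW hj, dotProduct_zero, dotProduct_fVec H G A hHs hj]
    ring
  have hg : g ≠ 0 := by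
    intro hg
    refine ((fullRowRank_insert_iff G A hj).mp hA).2 ?_
    rw [← sub_eq_zero.mp hg]
    exact (mem_span_iff_exists_subRows_transpose_mulVec G A).mpr ⟨_, rfl⟩
  simpa [hC] using hH.inv.dotProduct_mulVec_pos hg

theorem cVal_add_vVec_dotProduct_mul_Cval (hH : H.IsSymm) (hC : Cval H G A j ≠ 0) :
    (cVal H G b A j + vVec H G S A j ⬝ᵥ θ) * Cval H G A j =
      wvec H G A j ⬝ᵥ ((Wmat H G A)⁻¹ *ᵥ subVec (b + S *ᵥ θ) A) - (b + S *ᵥ θ) j := by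
  have hWinv : ((Wmat H G A)⁻¹)ᵀ = (Wmat H G A)⁻¹ := (Wmat_isSymm H G A hH).inv.eq
  have hθ : (subRows S A)ᵀ *ᵥ ((Wmat H G A)⁻¹ *ᵥ wvec H G A j) ⬝ᵥ θ =
      wvec H G A j ⬝ᵥ ((Wmat H G A)⁻¹ *ᵥ (subRows S A *ᵥ θ)) := by
    rw [mulVec_transpose, ← dotProduct_mulVec, dotProduct_comm, dotProduct_mulVec,
      ← mulVec_transpose, hWinv, dotProduct_comm]
  have hu : subVec (b + S *ᵥ θ) A = subVec b A + subRows S A *ᵥ θ := rfl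
  rw [cVal, vVec, smul_dotProduct, sub_dotProduct, hθ, hu, mulVec_add, dotProduct_add]
  change _ = _ - (b j + S j ⬝ᵥ θ)
  rw [smul_eq_mul, ← mul_add, mul_comm, mul_inv_cancel_left₀ hC]
  ring

theorem zOf_insert (hH : H.PosDef) (hj : j ∉ A) (hA : FullRowRank G (insert j A)) :
    zOf H G b S (insert j A) θ =
      zOf H G b S A θ + (cVal H G b A j + vVec H G S A j ⬝ᵥ θ) • fVec H G A j := by
  have hHs : H.IsSymm := isHermitian_iff_isSymm.mp hH.isHermitian
  have hW := isUnit_det_Wmat H G A hH ((fullRowRank_insert_iff G A hj).mp hA).1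
  have hC := Cval_pos H G A hH hj hA
  refine zOf_eq_of_mem_stationarySpace H G b S _ θ (isUnit_det_Wmat H G _ hH hA) ?_ ?_
  · exact add_mem
      (stationarySpace_mono H G (Finset.subset_insert j A) (zOf_mem_stationarySpace H G b S A θ))
      (Submodule.smul_mem _ _ (fVec_mem_stationarySpace H G A))
  ext ⟨i, hi⟩
  rw [subRows_mulVec_apply, dotProduct_add, dotProduct_smul, smul_eq_mul]
  obtain rfl | hi := Finset.mem_insert.mp hi
  · rw [dotProduct_fVec H G A hHs hj, zOf_eq_mulVec,
      dotProduct_mulVec_subRows_transpose H G A hHs]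
    change _ = (b + S *ᵥ θ) i
    linear_combination -cVal_add_vVec_dotProduct_mul_Cval H G b S A θ hHs hC.ne'
  · have hz := congrFun (subRows_mulVec_zOf H G b S A θ hW) ⟨i, hi⟩
    have hf := congrFun (subRows_mulVec_fVec H G A hW hj) ⟨i, hi⟩
    rw [subRows_mulVec_apply] at hz hf
    rw [hz, hf, Pi.zero_apply, mul_zero, add_zero]
    rfl

end Update

end Kkt

/-- Theorem 3, primal part: along a path `A_0, …, A_K` of active sets, each of
full row rank and each obtained from the previous one by adding or removing a
single constraint `j_l` (with the corresponding rank-one update quantities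
`c_l`, `v_l`, `f_l` from Theorem 1, negating `f` for a removal), the primal
solution satisfies `z_{A_K}(θ) = z_{A_0}(θ) + Σ_{l=1}^{K} f_l (c_l + v_lᵀθ)`. -/
theorem primal_path_update
    {m n nc : ℕ} (H : Matrix (Fin m) (Fin m) ℝ) (hH : H.PosDef)
    (G : Matrix (Fin nc) (Fin m) ℝ) (b : Fin nc → ℝ) (S : Matrix (Fin nc) (Fin n) ℝ)
    (K : ℕ) (A : Fin (K + 1) → Finset (Fin nc)) (j : Fin K → Fin nc)
    (c : Fin K → ℝ) (v : Fin K → Fin n → ℝ) (f : Fin K → Fin m → ℝ)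
    (hrank : ∀ l : Fin (K + 1), FullRowRank G (A l))
    (hstep : ∀ l : Fin K,
      (j l ∉ A l.castSucc ∧ A l.succ = insert (j l) (A l.castSucc) ∧
        c l = cVal H G b (A l.castSucc) (j l) ∧
        v l = vVec H G S (A l.castSucc) (j l) ∧
        f l = fVec H G (A l.castSucc) (j l)) ∨
      (j l ∈ A l.castSucc ∧ A l.succ = (A l.castSucc).erase (j l) ∧
        c l = cVal H G b (A l.succ) (j l) ∧
        v l = vVec H G S (A l.succ) (j l) ∧
        f l = -fVec H G (A l.succ) (j l))) :
    ∀ θ : Fin n → ℝ,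
      zOf H G b S (A (Fin.last K)) θ =
        zOf H G b S (A 0) θ + ∑ l : Fin K, (c l + v l ⬝ᵥ θ) • f l := by
  intro θ
  have hstep_eq : ∀ l : Fin K,
      zOf H G b S (A l.succ) θ - zOf H G b S (A l.castSucc) θ = (c l + v l ⬝ᵥ θ) • f l := by
    intro l
    rcases hstep l with ⟨hj, hA, hc, hv, hf⟩ | ⟨hj, hA, hc, hv, hf⟩
    · rw [hA, hc, hv, hf, zOf_insert H G b S _ θ hH hj (hA ▸ hrank l.succ), add_sub_cancel_left]
    · have hj' : j l ∉ A l.succ := hA ▸ Finset.notMem_erase _ _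
      have hins : insert (j l) (A l.succ) = A l.castSucc := hA ▸ Finset.insert_erase hj
      rw [hc, hv, hf, ← hins, zOf_insert H G b S _ θ hH hj' (hins ▸ hrank l.castSucc),
        smul_neg]
      abel
  rw [← Finset.sum_congr rfl fun l _ => hstep_eq l,
    sum_succ_sub_castSucc fun l => zOf H G b S (A l) θ]
  abel

end MpQP
end
end
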